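/- Let G be a finite simple graph with vertex cover S, let S' ⊆ V(G)∖S, and let D be the set of vertices w ∈ V(G)∖(S ∪ S') of degree at most 2. Suppose that for every w ∈ D there exist at least three distinct vertices in S' whose open neighborhood in G is exactly N(w). Then G admits a 2-CNCF-coloring if and only if the induced subgraph G − D (obtained by deleting all vertices of D) admits a 2-CNCF-coloring. -/

import Mathlib

inductive Color where
  | red
  | blue
deriving DecidableEq

/-- A coloring `c` of the vertices of `G` is a closed-neighborhood conflict-free
coloring if every closed neighborhood `N[v] = {v} ∪ N(v)` contains a vertex whose
color is unique in `N[v]`. -/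
def IsCNCF {V C : Type*} (G : SimpleGraph V) (c : V → C) : Prop :=
  ∀ v : V, ∃ u ∈ insert v (G.neighborSet v),
    ∀ w ∈ insert v (G.neighborSet v), w ≠ u → c w ≠ c u

/-!
A vertex `w ∈ D` is never the uniquely coloured vertex of a neighbour's closed neighbourhood in a
2-colouring: its twins `a, b` would then share the colour of that neighbour `v`, which forces the
second neighbour `x` of `w` to be the witness of `N[a] ⊆ {a, v, x}`, and then `N[x]` contains two
vertices of each colour (`x, w` and `a, b`). So every 2-CNCF colouring of `G` restricts to `G - D`.
Conversely, since `D` is independent, a CNCF colouring of `G - D` extends by giving each `w ∈ D`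
the colour of a twin outside `D` that is not the witness of any of the at most two neighbours
of `w`.
-/

theorem Color.eq_of_ne_of_ne {x y z : Color} (hx : x ≠ z) (hy : y ≠ z) : x = y := by
  cases x <;> cases y <;> cases z <;> simp_all

section

variable {V C : Type*}

def IsUniquelyColored (c : V → C) (s : Set V) (u : V) : Prop :=
  u ∈ s ∧ ∀ w ∈ s, w ≠ u → c w ≠ c u

namespace IsUniquelyColored

variable {c : V → C} {s t : Set V} {u : V}

theorem color_ne_of_color_eq {p q : V} (hu : IsUniquelyColored c s u) (hp : p ∈ s) (hq : q ∈ s)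
    (hpq : p ≠ q) (hcol : c p = c q) : c u ≠ c p := by
  intro hup
  by_cases h : p = u
  · exact hu.2 q hq (h ▸ hpq.symm) (hcol.symm.trans hup.symm)
  · exact hu.2 p hp h hup.symm

theorem mono (hu : IsUniquelyColored c s u) (hut : u ∈ t) (hts : t ⊆ s) :
    IsUniquelyColored c t u :=
  ⟨hut, fun w hw => hu.2 w (hts hw)⟩

theorem congr {c' : V → C} (hu : IsUniquelyColored c s u) (hcc' : s.EqOn c c') :
    IsUniquelyColored c' s u :=
  ⟨hu.1, fun w hw hwu => hcc' hw ▸ hcc' hu.1 ▸ hu.2 w hw hwu⟩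

theorem of_subset (hu : IsUniquelyColored c s u) (hst : s ⊆ t)
    (hcopy : ∀ w ∈ t, w ∉ s → ∃ w' ∈ s, w' ≠ u ∧ c w = c w') : IsUniquelyColored c t u := by
  refine ⟨hst hu.1, fun w hw hwu => ?_⟩
  by_cases hws : w ∈ s
  · exact hu.2 w hws hwu
  · obtain ⟨w', hw's, hw'u, hcw⟩ := hcopy w hw hws
    exact hcw ▸ hu.2 w' hw's hw'u

theorem exists_insert_of_color_eq {a b : V} (hu : IsUniquelyColored c (insert a s) u)
    (ha : a ∉ s) (hb : b ∉ s) (hcol : c b = c a) : ∃ u', IsUniquelyColored c (insert b s) u' := by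
  by_cases hua : u = a
  · subst hua
    refine ⟨b, Set.mem_insert b s, fun w hw hwb => ?_⟩
    have hws : w ∈ s := hw.resolve_left hwb
    exact hcol ▸ hu.2 w (Or.inr hws) (ne_of_mem_of_not_mem hws ha)
  · refine ⟨u, Or.inr (hu.1.resolve_left hua), fun w hw hwu => ?_⟩
    rcases hw with rfl | hws
    · exact hcol ▸ hu.2 a (Set.mem_insert a s) (Ne.symm hua)
    · exact hu.2 w (Or.inr hws) hwu

end IsUniquelyColored

variable {G : SimpleGraph V}

theorem isCNCF_iff {c : V → C} :
    IsCNCF G c ↔ ∀ v, ∃ u, IsUniquelyColored c (insert v (G.neighborSet v)) u :=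
  Iff.rfl

theorem mem_insert_neighborSet_induce {s : Set V} {v w : s} :
    w ∈ insert v ((G.induce s).neighborSet v) ↔ (w : V) ∈ insert (v : V) (G.neighborSet v) := by
  simp [Subtype.ext_iff]

theorem isCNCF_induce_iff {s : Set V} {c : V → C} :
    IsCNCF (G.induce s) (c ∘ Subtype.val) ↔
      ∀ v ∈ s, ∃ u, IsUniquelyColored c (insert v (G.neighborSet v) ∩ s) u := by
  constructor
  · rintro h v hv
    obtain ⟨u, hu, huniq⟩ := h ⟨v, hv⟩
    refine ⟨u, ⟨mem_insert_neighborSet_induce.1 hu, u.2⟩, fun w ⟨hw, hws⟩ hwu => ?_⟩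
    exact huniq ⟨w, hws⟩ (mem_insert_neighborSet_induce.2 hw) fun h => hwu (congrArg Subtype.val h)
  · rintro h ⟨v, hv⟩
    obtain ⟨u, ⟨hu, hus⟩, huniq⟩ := h v hv
    refine ⟨⟨u, hus⟩, mem_insert_neighborSet_induce.2 hu, fun w hw hwu => ?_⟩
    exact huniq w ⟨mem_insert_neighborSet_induce.1 hw, w.2⟩ fun h => hwu (Subtype.ext h)

theorem SimpleGraph.exists_neighborSet_subset_pair {u v : V} [Fintype (G.neighborSet u)]
    (hdeg : G.degree u ≤ 2) (huv : G.Adj u v) : ∃ x, G.neighborSet u ⊆ {v, x} := by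
  classical
  have hcard : ((G.neighborFinset u).erase v).card ≤ 1 := by
    rw [Finset.card_erase_of_mem ((G.mem_neighborFinset u v).2 huv),
      G.card_neighborFinset_eq_degree]
    omega
  have : Nonempty V := ⟨v⟩
  obtain ⟨x, hx⟩ := Finset.card_le_one_iff_subset_singleton.1 hcard
  refine ⟨x, fun w hw => ?_⟩
  by_cases hwv : w = v
  · exact Or.inl hwv
  · exact Or.inr <| Finset.mem_singleton.1 <|
      hx (Finset.mem_erase.2 ⟨hwv, (G.mem_neighborFinset u w).2 hw⟩)

theorem IsCNCF.not_isUniquelyColored_of_twins {c : V → Color} (hc : IsCNCF G c) {u v a b : V}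
    [Fintype (G.neighborSet u)] (hdeg : G.degree u ≤ 2) (hvu : G.Adj v u) (hab : a ≠ b)
    (hau : a ≠ u) (hbu : b ≠ u) (ha : G.neighborSet a = G.neighborSet u)
    (hb : G.neighborSet b = G.neighborSet u) :
    ¬IsUniquelyColored c (insert v (G.neighborSet v)) u := by
  intro hu
  have hNa : ∀ {w}, G.Adj a w ↔ G.Adj u w := fun {w} => Set.ext_iff.1 ha w
  have hNb : ∀ {w}, G.Adj b w ↔ G.Adj u w := fun {w} => Set.ext_iff.1 hb w
  have hva : G.Adj v a := (hNa.2 hvu.symm).symm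
  have hvb : G.Adj v b := (hNb.2 hvu.symm).symm
  have hcv : c v ≠ c u := hu.2 v (Set.mem_insert v _) hvu.ne
  have hca : c a = c v := Color.eq_of_ne_of_ne (hu.2 a (Or.inr hva) hau) hcv
  have hcb : c b = c v := Color.eq_of_ne_of_ne (hu.2 b (Or.inr hvb) hbu) hcv
  obtain ⟨x, hx⟩ := G.exists_neighborSet_subset_pair hdeg hvu.symm
  obtain ⟨w, hw⟩ := isCNCF_iff.1 hc a
  have hcw : c w ≠ c a :=
    hw.color_ne_of_color_eq (Set.mem_insert a _) (Or.inr hva.symm) hva.ne' hca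
  have hux : G.Adj u x ∧ c x ≠ c a := by
    rcases hw.1 with rfl | haw
    · exact absurd rfl hcw
    rcases hx (hNa.1 haw) with rfl | rfl
    · exact absurd hca.symm hcw
    · exact ⟨hNa.1 haw, hcw⟩
  have hcx : c x = c u := Color.eq_of_ne_of_ne (hca ▸ hux.2) hcv.symm
  obtain ⟨w', hw'⟩ := isCNCF_iff.1 hc x
  have h₁ : c w' ≠ c x :=
    hw'.color_ne_of_color_eq (Set.mem_insert x _) (Or.inr hux.1.symm) hux.1.ne' hcx
  have h₂ : c w' ≠ c a := hw'.color_ne_of_color_eq (Or.inr (hNa.2 hux.1).symm)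
    (Or.inr (hNb.2 hux.1).symm) hab (hca.trans hcb.symm)
  exact hux.2 (Color.eq_of_ne_of_ne h₁.symm h₂.symm)

theorem IsCNCF.induce_compl_of_twins [G.LocallyFinite] {c : V → Color} (hc : IsCNCF G c)
    {D : Set V} (hdeg : ∀ w ∈ D, G.degree w ≤ 2)
    (htwins : ∀ w ∈ D, ∃ a b, a ≠ b ∧ a ≠ w ∧ b ≠ w ∧
      G.neighborSet a = G.neighborSet w ∧ G.neighborSet b = G.neighborSet w) :
    IsCNCF (G.induce Dᶜ) (c ∘ Subtype.val) := by
  rw [isCNCF_induce_iff]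
  intro v hv
  obtain ⟨u, hu⟩ := (isCNCF_iff.1 hc) v
  refine ⟨u, hu.mono ⟨hu.1, fun huD => ?_⟩ Set.inter_subset_left⟩
  have hvu : G.Adj v u := hu.1.resolve_left fun h => hv (h ▸ huD)
  obtain ⟨a, b, hab, hau, hbu, ha, hb⟩ := htwins u huD
  exact hc.not_isUniquelyColored_of_twins (hdeg u huD) hvu hab hau hbu ha hb hu

theorem exists_isCNCF_of_isCNCF_induce_compl [G.LocallyFinite] {D : Set V}
    (hDN : ∀ w ∈ D, G.neighborSet w ⊆ Dᶜ)
    (htwins : ∀ w ∈ D, ∃ T : Finset V, G.degree w < T.card ∧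
      ∀ a ∈ T, a ∉ D ∧ G.neighborSet a = G.neighborSet w)
    {c : V → C} (hc : IsCNCF (G.induce Dᶜ) (c ∘ Subtype.val)) : ∃ c' : V → C, IsCNCF G c' := by
  classical
  choose! u hu using isCNCF_induce_iff.1 hc
  -- pigeonhole: `w` has fewer neighbours than twins
  have htwin : ∀ w ∈ D, ∃ a, a ∉ D ∧ G.neighborSet a = G.neighborSet w ∧
      ∀ y ∈ G.neighborSet w, a ≠ u y := by
    intro w hw
    obtain ⟨T, hT, hTtwin⟩ := htwins w hw
    obtain ⟨a, haT, hau⟩ := Finset.exists_mem_notMem_of_card_lt_card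
      ((Finset.card_image_le (s := G.neighborFinset w) (f := u)).trans_lt hT)
    refine ⟨a, (hTtwin a haT).1, (hTtwin a haT).2, fun y hy hay => hau ?_⟩
    exact Finset.mem_image.2 ⟨y, (G.mem_neighborFinset w y).2 hy, hay.symm⟩
  choose! t htD htN htu using htwin
  set c' : V → C := fun x => if x ∈ D then c (t x) else c x with hc'
  have hcc' : Dᶜ.EqOn c c' := fun x hx => (if_neg hx).symm
  have hc't : ∀ w ∈ D, c' w = c' (t w) := fun w hw => by simp [hc', hw, htD w hw]
  refine ⟨c', isCNCF_iff.2 fun v => ?_⟩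
  by_cases hv : v ∈ D
  · have hN : insert (t v) (G.neighborSet (t v)) ∩ Dᶜ = insert (t v) (G.neighborSet v) := by
      rw [htN v hv, Set.insert_inter_of_mem (htD v hv), Set.inter_eq_left.2 (hDN v hv)]
    have hut := hu (t v) (htD v hv)
    rw [hN] at hut
    refine (hut.congr (hcc'.mono (Set.insert_subset (htD v hv) (hDN v hv))))
      |>.exists_insert_of_color_eq ?_ G.notMem_neighborSet_self (hc't v hv)
    exact htN v hv ▸ G.notMem_neighborSet_self
  · refine ⟨u v, ((hu v hv).congr (hcc'.mono Set.inter_subset_right)).of_subset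
      Set.inter_subset_left fun w hw hwD => ?_⟩
    have hwD : w ∈ D := by_contra fun h => hwD ⟨hw, h⟩
    have hvw : G.Adj v w := hw.resolve_left fun h => hv (h ▸ hwD)
    have hvtw : G.Adj v (t w) := (Set.ext_iff.1 (htN w hwD) v |>.2 hvw.symm).symm
    exact ⟨t w, ⟨Or.inr hvtw, htD w hwD⟩, htu w hwD v hvw.symm, hc't w hwD⟩

end

theorem two_CNCF_delete_low_degree_general {V : Type*} [Fintype V]
    (G : SimpleGraph V) [DecidableRel G.Adj]
    (S S' : Set V)
    (hvc : ∀ ⦃a b : V⦄, G.Adj a b → a ∈ S ∨ b ∈ S)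
    (D : Set V) (hD : D = {w : V | w ∉ S ∧ w ∉ S' ∧ G.degree w ≤ 2})
    (hmark : ∀ w ∈ D, ∃ a ∈ S', ∃ b ∈ S', ∃ d ∈ S',
      a ≠ b ∧ a ≠ d ∧ b ≠ d ∧
      G.neighborSet a = G.neighborSet w ∧
      G.neighborSet b = G.neighborSet w ∧
      G.neighborSet d = G.neighborSet w) :
    (∃ c : V → Color, IsCNCF G c) ↔
      (∃ c : (Dᶜ : Set V) → Color, IsCNCF (G.induce (Dᶜ : Set V)) c) := by
  have hDmem : ∀ w ∈ D, w ∉ S ∧ w ∉ S' ∧ G.degree w ≤ 2 := by subst hD; exact fun w hw => hw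
  have hS'D : ∀ a ∈ S', a ∉ D := fun a ha haD => (hDmem a haD).2.1 ha
  constructor
  · rintro ⟨c, hc⟩
    refine ⟨c ∘ Subtype.val, hc.induce_compl_of_twins (fun w hw => (hDmem w hw).2.2) fun w hw => ?_⟩
    obtain ⟨a, ha, b, hb, -, -, hab, -, -, hNa, hNb, -⟩ := hmark w hw
    exact ⟨a, b, hab, ne_of_mem_of_not_mem ha (hDmem w hw).2.1,
      ne_of_mem_of_not_mem hb (hDmem w hw).2.1, hNa, hNb⟩
  · classical
    rintro ⟨c, hc⟩
    rw [← Function.extend_comp Subtype.val_injective c fun _ => Color.red] at hc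
    refine exists_isCNCF_of_isCNCF_induce_compl (fun w hw y hy hyD => ?_) (fun w hw => ?_) hc
    · exact (hvc hy).elim (hDmem w hw).1 (hDmem y hyD).1
    · obtain ⟨a, ha, b, hb, d, hd, hab, had, hbd, hNa, hNb, hNd⟩ := hmark w hw
      refine ⟨{a, b, d}, ?_, ?_⟩
      · rw [Finset.card_insert_of_notMem (by simp [hab, had]), Finset.card_pair hbd]
        exact Nat.lt_succ_of_le (hDmem w hw).2.2
      · simp only [Finset.mem_insert, Finset.mem_singleton]
        rintro x (rfl | rfl | rfl)
        exacts [⟨hS'D x ha, hNa⟩, ⟨hS'D x hb, hNb⟩, ⟨hS'D x hd, hNd⟩]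

/-- Let `S` be a vertex cover of `G`, `S' ⊆ V(G) ∖ S`, and let `D` be the set of
vertices outside `S ∪ S'` of degree at most 2. If for every `w ∈ D` there are at
least three distinct vertices of `S'` whose open neighborhood equals `N(w)`, then
`G` is 2-CNCF-colorable if and only if `G − D` is 2-CNCF-colorable. -/
theorem two_CNCF_delete_low_degree {V : Type*} [Fintype V] [DecidableEq V]
    (G : SimpleGraph V) [DecidableRel G.Adj]
    (S S' : Set V)
    (hvc : ∀ ⦃a b : V⦄, G.Adj a b → a ∈ S ∨ b ∈ S)
    (hS' : S' ⊆ Sᶜ)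
    (D : Set V) (hD : D = {w : V | w ∉ S ∧ w ∉ S' ∧ G.degree w ≤ 2})
    (hmark : ∀ w ∈ D, ∃ a ∈ S', ∃ b ∈ S', ∃ d ∈ S',
      a ≠ b ∧ a ≠ d ∧ b ≠ d ∧
      G.neighborSet a = G.neighborSet w ∧
      G.neighborSet b = G.neighborSet w ∧
      G.neighborSet d = G.neighborSet w) :
    (∃ c : V → Color, IsCNCF G c) ↔
      (∃ c : (Dᶜ : Set V) → Color, IsCNCF (G.induce (Dᶜ : Set V)) c) :=
  two_CNCF_delete_low_degree_general G S S' hvc D hD hmark
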